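/- Let ω = e^{i2π/3}, f(z) = -(z-ω)²/((z-1)(z+2)(z+1/2)), g(z) = -(z-ω)²/(z(z+1)). For every ζ in the open upper half plane avoiding poles of f and g, (|f(conj(ζ))|² - |f(ζ)|²)·(|g(conj(ζ))|² - |g(ζ)|²) > 0. -/

import Mathlib

open Complex

noncomputable def hexFfac (z : ℂ) : ℂ :=
  -(z - Complex.exp (2 * Real.pi * Complex.I / 3))^2 / ((z - 1) * (z + 2) * (z + 1/2))

noncomputable def hexGfac (z : ℂ) : ℂ :=
  -(z - Complex.exp (2 * Real.pi * Complex.I / 3))^2 / (z * (z + 1))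

open ComplexConjugate

/-! Both `hexFfac` and `hexGfac` have the shape `-(z - ω)² / q z` with `q` real on the real
axis and `ω` in the upper half plane. Reflecting `ζ` leaves `‖q ζ‖` unchanged and replaces
`‖ζ - ω‖` by `‖ζ - conj ω‖`, which is strictly larger because `ζ` and `ω` lie on the same side
of the real axis; so each factor of the product is positive. -/

theorem Complex.norm_sub_lt_norm_sub_conj {z w : ℂ} (hz : 0 < z.im) (hw : 0 < w.im) :
    ‖z - w‖ < ‖z - conj w‖ := by
  have hsq : ‖z - conj w‖ ^ 2 = ‖z - w‖ ^ 2 + 4 * z.im * w.im := by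
    simp only [Complex.sq_norm, normSq_apply, sub_re, sub_im, conj_re, conj_im]
    ring
  have hpos : 0 < 4 * z.im * w.im := by positivity
  exact lt_of_pow_lt_pow_left₀ 2 (norm_nonneg _) (by linarith)

theorem Complex.norm_conj_sub (z w : ℂ) : ‖conj z - w‖ = ‖z - conj w‖ := by
  rw [← norm_conj, map_sub, conj_conj]

theorem Complex.norm_neg_sq_div_lt_conj {q : ℂ → ℂ} (hq : ∀ z, q (conj z) = conj (q z))
    {z w : ℂ} (hz : 0 < z.im) (hw : 0 < w.im) (hqz : q z ≠ 0) :
    ‖-(z - w) ^ 2 / q z‖ < ‖-(conj z - w) ^ 2 / q (conj z)‖ := by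
  simp only [norm_div, norm_neg, norm_pow, hq, norm_conj, norm_conj_sub]
  have hqz' : 0 < ‖q z‖ := norm_pos_iff.mpr hqz
  gcongr
  exact norm_sub_lt_norm_sub_conj hz hw

theorem Complex.im_exp_two_pi_I_div_three_pos : 0 < (exp (2 * Real.pi * I / 3)).im := by
  have h : (2 * Real.pi * I / 3 : ℂ) = ((2 * Real.pi / 3 : ℝ) : ℂ) * I := by
    push_cast
    ring
  rw [h, exp_ofReal_mul_I_im]
  apply Real.sin_pos_of_pos_of_lt_pi <;> linarith [Real.pi_pos]

theorem sub_sq_pos_of_lt {a b : ℝ} (hb : 0 ≤ b) (h : b < a) : 0 < a ^ 2 - b ^ 2 :=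
  sub_pos.mpr (pow_lt_pow_left₀ h hb two_ne_zero)

theorem stmt_9 :
    ∀ ζ : ℂ, 0 < ζ.im → ζ ∉ ({1, -2, -1/2, 0, -1} : Set ℂ) →
      0 < (‖hexFfac (starRingEnd ℂ ζ)‖^2 - ‖hexFfac ζ‖^2)
        * (‖hexGfac (starRingEnd ℂ ζ)‖^2 - ‖hexGfac ζ‖^2) := by
  intro ζ hζ hpoles
  simp only [Set.mem_insert_iff, Set.mem_singleton_iff, not_or] at hpoles
  obtain ⟨h1, h2, h3, h0, h5⟩ := hpoles
  have hω := im_exp_two_pi_I_div_three_pos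
  have hF : ‖hexFfac ζ‖ < ‖hexFfac (conj ζ)‖ := by
    refine norm_neg_sq_div_lt_conj (q := fun z ↦ (z - 1) * (z + 2) * (z + 1 / 2))
      (fun z ↦ by simp [map_ofNat]) hζ hω ?_
    have h2' : ζ + 2 ≠ 0 := fun h ↦ h2 (by linear_combination h)
    have h3' : ζ + 1 / 2 ≠ 0 := fun h ↦ h3 (by linear_combination h)
    exact mul_ne_zero (mul_ne_zero (sub_ne_zero.mpr h1) h2') h3'
  have hG : ‖hexGfac ζ‖ < ‖hexGfac (conj ζ)‖ := by
    refine norm_neg_sq_div_lt_conj (q := fun z ↦ z * (z + 1)) (fun z ↦ by simp) hζ hω ?_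
    exact mul_ne_zero h0 fun h ↦ h5 (by linear_combination h)
  exact mul_pos (sub_sq_pos_of_lt (norm_nonneg _) hF) (sub_sq_pos_of_lt (norm_nonneg _) hG)
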